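/- arXiv:1607.08504 — 2 statements merged into one kernel-verified Lean document; each statement's English description precedes it below -/
import Mathlib

section
/- Let Γ be a finite-dimensional k-algebra such that the injective envelope of every projective Γ-module is projective (dominant dimension at least 1 formulation). If X is a Γ-module of projective dimension at most 1, then X embeds into a projective-injective Γ-module; in particular X is torsionless. -/
/-
Write `X = P₀ / P₁` with `P₁ ↪ P₀` projective, and let `P₁ ↪ I₁`, `P₀ ↪ I₀` be the injective
envelopes. Extending `P₁ → P₀ ↪ I₀` along `P₁ ↪ I₁` gives `h : I₁ → I₀`, injective because
`P₁ ↪ I₁` is essential and split because `I₁` is injective, so `C = I₀ / I₁` is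
projective-injective. The induced map `X → C` has kernel `(P₀ ∩ I₁) / P₁ ⊆ I₁ / P₁`, which
embeds in the projective-injective `J`; extending `I₁ / P₁ → J` to `I₀` (as `J` is injective)
yields an embedding `X ↪ J × C`.
-/

/-- A module has projective dimension at most 1 if it admits a projective
resolution `0 → P₁ → P₀ → M → 0`. -/
def pdLE1 (R : Type) [Ring R] (M : Type) [AddCommGroup M] [Module R M] : Prop :=
  ∃ (P₁ P₀ : ModuleCat.{0} R) (i : P₁ →ₗ[R] P₀) (p : P₀ →ₗ[R] M),
    Module.Projective R P₁ ∧ Module.Projective R P₀ ∧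
    Function.Injective i ∧ Function.Exact i p ∧ Function.Surjective p

/-- An injective map `f : X → I` is an essential embedding if every nonzero
submodule of `I` meets the image of `f` nontrivially. -/
def IsEssentialEmbedding (R : Type) [Ring R] {X I : Type}
    [AddCommGroup X] [Module R X] [AddCommGroup I] [Module R I] (f : X →ₗ[R] I) : Prop :=
  Function.Injective f ∧
    ∀ S : Submodule R I, S ⊓ LinearMap.range f = ⊥ → S = ⊥

universe u v

open LinearMap Submodule

section InjectiveModules

variable {R : Type u} [Ring R] {M N : Type v} [AddCommGroup M] [Module R M]
  [AddCommGroup N] [Module R N]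

theorem Module.Injective.of_split [Module.Injective R N] (i : M →ₗ[R] N) (s : N →ₗ[R] M)
    (H : s ∘ₗ i = LinearMap.id) : Module.Injective R M where
  out _ _ _ _ _ _ f hf g := by
    obtain ⟨G, hG⟩ := Module.Injective.out f hf (i ∘ₗ g)
    exact ⟨s ∘ₗ G, fun x => by simp [hG, ← LinearMap.comp_apply s i, H]⟩

instance Module.Injective.prod [Module.Injective R M] [Module.Injective R N] :
    Module.Injective R (M × N) where
  out _ _ _ _ _ _ f hf g := by
    obtain ⟨g₁, hg₁⟩ := Module.Injective.out f hf (fst R M N ∘ₗ g)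
    obtain ⟨g₂, hg₂⟩ := Module.Injective.out f hf (snd R M N ∘ₗ g)
    exact ⟨g₁.prod g₂, fun x => Prod.ext (hg₁ x) (hg₂ x)⟩

theorem Module.Injective.exists_rightInverse_mkQ_range [Module.Injective R M] (h : M →ₗ[R] N)
    (hh : Function.Injective h) :
    ∃ s : N ⧸ range h →ₗ[R] N, (range h).mkQ ∘ₗ s = LinearMap.id := by
  obtain ⟨r, hr⟩ := Module.Injective.out h hh LinearMap.id
  refine ⟨(range h).liftQ (LinearMap.id - h ∘ₗ r) ?_, ?_⟩
  · rintro - ⟨z, rfl⟩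
    simp [hr z]
  · ext y
    simp

theorem Module.Injective.quotient_range [Module.Injective R M] [Module.Injective R N]
    (h : M →ₗ[R] N) (hh : Function.Injective h) : Module.Injective R (N ⧸ range h) :=
  have ⟨s, hs⟩ := Module.Injective.exists_rightInverse_mkQ_range h hh
  .of_split s _ hs

theorem Module.Projective.quotient_range_of_injective [Module.Injective R M]
    [Module.Projective R N] (h : M →ₗ[R] N) (hh : Function.Injective h) :
    Module.Projective R (N ⧸ range h) :=
  have ⟨s, hs⟩ := Module.Injective.exists_rightInverse_mkQ_range h hh
  .of_split s _ hs

end InjectiveModules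

theorem IsEssentialEmbedding.injective_of_injective_comp {R : Type} [Ring R] {X I M : Type}
    [AddCommGroup X] [Module R X] [AddCommGroup I] [Module R I] [AddCommGroup M] [Module R M]
    {f : X →ₗ[R] I} (hf : IsEssentialEmbedding R f) {h : I →ₗ[R] M}
    (hhf : Function.Injective (h ∘ₗ f)) : Function.Injective h := by
  rw [← ker_eq_bot] at hhf ⊢
  apply hf.2
  rw [inf_comm, ← map_comap_eq, ← ker_comp, hhf, Submodule.map_bot]

theorem ker_prod_mkQ_range {R : Type u} [Ring R] {A B J : Type*} [AddCommGroup A] [Module R A]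
    [AddCommGroup B] [Module R B] [AddCommGroup J] [Module R J] (β : B →ₗ[R] J)
    (h : A →ₗ[R] B) : ker (β.prod (range h).mkQ) = (ker (β ∘ₗ h)).map h := by
  rw [ker_prod, ker_mkQ, ker_comp, map_comap_eq, inf_comm]

theorem Function.Exact.exists_injective_of_ker_eq_range {R : Type u} [Ring R]
    {P₁ P₀ X T : Type*} [AddCommGroup P₁] [Module R P₁] [AddCommGroup P₀] [Module R P₀]
    [AddCommGroup X] [Module R X] [AddCommGroup T] [Module R T]
    {i : P₁ →ₗ[R] P₀} {p : P₀ →ₗ[R] X} (hexact : Function.Exact i p)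
    (hp : Function.Surjective p) {Φ : P₀ →ₗ[R] T} (hΦ : ker Φ = range i) :
    ∃ Ψ : X →ₗ[R] T, Function.Injective Ψ :=
  ⟨(range i).liftQ Φ hΦ.ge ∘ₗ (hexact.linearEquivOfSurjective hp).symm,
    (ker_eq_bot.mp (ker_liftQ_eq_bot' _ Φ hΦ.symm)).comp
      (hexact.linearEquivOfSurjective hp).symm.injective⟩

theorem Function.Exact.exists_injective_prod_quotient_range {R : Type} [Ring R]
    {P₁ P₀ X I₁ I₀ J : Type} [AddCommGroup P₁] [Module R P₁] [AddCommGroup P₀] [Module R P₀]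
    [AddCommGroup X] [Module R X] [AddCommGroup I₁] [Module R I₁] [AddCommGroup I₀]
    [Module R I₀] [AddCommGroup J] [Module R J]
    [Module.Injective R I₁] [Module.Injective R I₀] [Module.Injective R J]
    {i : P₁ →ₗ[R] P₀} {p : P₀ →ₗ[R] X} (hi : Function.Injective i)
    (hexact : Function.Exact i p) (hp : Function.Surjective p)
    {f₁ : P₁ →ₗ[R] I₁} (hf₁ : IsEssentialEmbedding R f₁)
    {f₀ : P₀ →ₗ[R] I₀} (hf₀ : Function.Injective f₀)
    {g : I₁ ⧸ range f₁ →ₗ[R] J} (hg : Function.Injective g) :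
    ∃ h : I₁ →ₗ[R] I₀, Function.Injective h ∧
      ∃ Ψ : X →ₗ[R] J × (I₀ ⧸ range h), Function.Injective Ψ := by
  obtain ⟨h, hh_ext⟩ := Module.Injective.out f₁ hf₁.1 (f₀ ∘ₗ i)
  have hsquare : h ∘ₗ f₁ = f₀ ∘ₗ i := LinearMap.ext hh_ext
  have hh_inj : Function.Injective h :=
    hf₁.injective_of_injective_comp (hsquare ▸ hf₀.comp hi)
  obtain ⟨β, hβ⟩ := Module.Injective.out h hh_inj (g ∘ₗ (range f₁).mkQ)
  have hβ_ext : β ∘ₗ h = g ∘ₗ (range f₁).mkQ := LinearMap.ext hβ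
  refine ⟨h, hh_inj, hexact.exists_injective_of_ker_eq_range hp
    (Φ := (β.prod (range h).mkQ) ∘ₗ f₀) ?_⟩
  calc ker ((β.prod (range h).mkQ) ∘ₗ f₀)
      = comap f₀ ((ker (β ∘ₗ h)).map h) := by rw [ker_comp, ker_prod_mkQ_range]
    _ = comap f₀ ((range f₁).map h) := by
      rw [hβ_ext, ker_comp_of_ker_eq_bot _ (ker_eq_bot.mpr hg), ker_mkQ]
    _ = comap f₀ ((range i).map f₀) := by rw [← range_comp, hsquare, range_comp]
    _ = range i := comap_map_eq_of_injective hf₀ _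

theorem stmt_6_general (Γ : Type) [Ring Γ]
    (hdom : ∀ (P : ModuleCat.{0} Γ), Module.Projective Γ P →
      ∃ (I : ModuleCat.{0} Γ) (f : P →ₗ[Γ] I),
        IsEssentialEmbedding Γ f ∧ Module.Injective Γ I ∧ Module.Projective Γ I ∧
        ∃ (J : ModuleCat.{0} Γ) (g : (I ⧸ LinearMap.range f) →ₗ[Γ] J),
          Module.Injective Γ J ∧ Module.Projective Γ J ∧ Function.Injective g)
    (X : Type) [AddCommGroup X] [Module Γ X] (hX : pdLE1 Γ X) :
    (∃ (I : ModuleCat.{0} Γ) (f : X →ₗ[Γ] I),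
        Module.Injective Γ I ∧ Module.Projective Γ I ∧ Function.Injective f) ∧
      ∃ (P : ModuleCat.{0} Γ) (f : X →ₗ[Γ] P),
        Module.Projective Γ P ∧ Function.Injective f := by
  obtain ⟨P₁, P₀, i, p, hP₁, hP₀, hi, hexact, hp⟩ := hX
  obtain ⟨I₁, f₁, hf₁, hI₁, -, J, g, hJ, hJ_proj, hg⟩ := hdom P₁ hP₁
  obtain ⟨I₀, f₀, hf₀, hI₀, hI₀_proj, -⟩ := hdom P₀ hP₀
  obtain ⟨h, hh, Ψ, hΨ⟩ := hexact.exists_injective_prod_quotient_range hi hp hf₁ hf₀.1 hg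
  have : Module.Injective Γ (I₀ ⧸ range h) := .quotient_range h hh
  have : Module.Projective Γ (I₀ ⧸ range h) := .quotient_range_of_injective h hh
  exact ⟨⟨.of Γ (J × (I₀ ⧸ range h)), Ψ, inferInstance, inferInstance, hΨ⟩,
    ⟨.of Γ (J × (I₀ ⧸ range h)), Ψ, inferInstance, hΨ⟩⟩

/-- Let `Γ` be a finite-dimensional algebra such that for every projective
module `P`, the injective envelope `I(P)` is projective (and injective), and the
cokernel of `P → I(P)` embeds into a projective-injective module. Then every module of
projective dimension at most 1 embeds into a projective-injective module; in particular
it is torsionless. -/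
theorem stmt_6 (k : Type) [Field k] (Γ : Type) [Ring Γ] [Algebra k Γ]
    [FiniteDimensional k Γ]
    (hdom : ∀ (P : ModuleCat.{0} Γ), Module.Projective Γ P →
      ∃ (I : ModuleCat.{0} Γ) (f : P →ₗ[Γ] I),
        IsEssentialEmbedding Γ f ∧ Module.Injective Γ I ∧ Module.Projective Γ I ∧
        ∃ (J : ModuleCat.{0} Γ) (g : (I ⧸ LinearMap.range f) →ₗ[Γ] J),
          Module.Injective Γ J ∧ Module.Projective Γ J ∧ Function.Injective g)
    (X : Type) [AddCommGroup X] [Module Γ X] (hX : pdLE1 Γ X) :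
    (∃ (I : ModuleCat.{0} Γ) (f : X →ₗ[Γ] I),
        Module.Injective Γ I ∧ Module.Projective Γ I ∧ Function.Injective f) ∧
      ∃ (P : ModuleCat.{0} Γ) (f : X →ₗ[Γ] P),
        Module.Projective Γ P ∧ Function.Injective f :=
  stmt_6_general Γ hdom X hX
end

section
/- Let Λ be a finite-dimensional k-algebra, E a Λ-module with Λ ∈ add(E), and Γ = End_Λ(E)^op. For Λ-modules M, N and a morphism (g₁, g₀) from the object (f_M : M₁ → M₀) to (f_N : N₁ → N₀) in the morphism category, if the induced map on cokernels coker(Hom(E,f_M)) → coker(Hom(E,f_N)) is zero, then (g₁,g₀) factors through an object that is a direct sum of an object of the form (id : M → M) and an object of the form (N → 0). -/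
/-!
Since `M₀` is a direct summand of some `Eⁿ`, the hypothesis on `Hom(E, -)` upgrades to a lift
`ψ : M₀ → N₁` with `f_N ∘ ψ = g₀`. Then `(g₁, g₀)` factors through
`fst : M₀ × ker f_N → M₀` via `m ↦ (f_M m, g₁ m - ψ (f_M m))` and `(p, q) ↦ ψ p + q`.
-/

open LinearMap

section

variable {R : Type*} [Ring R] {N₁ N₀ : Type*} [AddCommGroup N₁] [Module R N₁]
  [AddCommGroup N₀] [Module R N₀]

theorem LinearMap.exists_lift_of_forall_single {ι : Type*} [Fintype ι] [DecidableEq ι]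
    {φ : ι → Type*} [∀ i, AddCommGroup (φ i)] [∀ i, Module R (φ i)]
    (f : N₁ →ₗ[R] N₀) (g : (∀ i, φ i) →ₗ[R] N₀)
    (h : ∀ i, ∃ ψ : φ i →ₗ[R] N₁, g ∘ₗ single R φ i = f ∘ₗ ψ) :
    ∃ ψ : (∀ i, φ i) →ₗ[R] N₁, f ∘ₗ ψ = g := by
  choose ψ hψ using h
  refine ⟨lsum R φ ℕ ψ, pi_ext fun i x => ?_⟩
  rw [comp_apply, lsum_piSingle, ← comp_apply f, ← hψ, comp_apply, single_apply]

theorem LinearMap.exists_lift_of_retract {X M : Type*} [AddCommGroup X] [Module R X]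
    [AddCommGroup M] [Module R M] {r : X →ₗ[R] M} {s : M →ₗ[R] X} (hrs : r ∘ₗ s = id)
    (f : N₁ →ₗ[R] N₀) (g : M →ₗ[R] N₀) (h : ∃ ψ : X →ₗ[R] N₁, f ∘ₗ ψ = g ∘ₗ r) :
    ∃ ψ : M →ₗ[R] N₁, f ∘ₗ ψ = g := by
  obtain ⟨ψ, hψ⟩ := h
  exact ⟨ψ ∘ₗ s, by rw [← comp_assoc, hψ, comp_assoc, hrs, comp_id]⟩

theorem LinearMap.exists_lift_of_retract_pi {ι : Type*} [Fintype ι] [DecidableEq ι]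
    {E M : Type*} [AddCommGroup E] [Module R E] [AddCommGroup M] [Module R M]
    {r : (ι → E) →ₗ[R] M} {s : M →ₗ[R] (ι → E)} (hrs : r ∘ₗ s = id)
    (f : N₁ →ₗ[R] N₀) (g : M →ₗ[R] N₀)
    (h : ∀ e : E →ₗ[R] M, ∃ ψ : E →ₗ[R] N₁, g ∘ₗ e = f ∘ₗ ψ) :
    ∃ ψ : M →ₗ[R] N₁, f ∘ₗ ψ = g :=
  exists_lift_of_retract hrs f g <|
    exists_lift_of_forall_single f (g ∘ₗ r) fun i => h (r ∘ₗ single R (fun _ => E) i)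

theorem LinearMap.exists_factorization_through_fst_ker {M₁ M₀ : Type*}
    [AddCommGroup M₁] [Module R M₁] [AddCommGroup M₀] [Module R M₀]
    {fM : M₁ →ₗ[R] M₀} {fN : N₁ →ₗ[R] N₀} {g₁ : M₁ →ₗ[R] N₁} {g₀ : M₀ →ₗ[R] N₀}
    (sq : fN ∘ₗ g₁ = g₀ ∘ₗ fM) {ψ : M₀ →ₗ[R] N₁} (hψ : fN ∘ₗ ψ = g₀) :
    ∃ (a₁ : M₁ →ₗ[R] M₀ × ker fN) (b₁ : M₀ × ker fN →ₗ[R] N₁),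
      fst R M₀ (ker fN) ∘ₗ a₁ = fM ∧ fN ∘ₗ b₁ = g₀ ∘ₗ fst R M₀ (ker fN) ∧
      b₁ ∘ₗ a₁ = g₁ := by
  have hker : ∀ m, g₁ m - ψ (fM m) ∈ ker fN := fun m => by
    rw [mem_ker, map_sub, ← comp_apply fN g₁, sq, ← comp_apply fN ψ, hψ, comp_apply, sub_self]
  refine ⟨fM.prod (codRestrict (ker fN) (g₁ - ψ ∘ₗ fM) hker), ψ.coprod (ker fN).subtype,
    fst_prod _ _, ?_, ?_⟩
  · ext p
    · simpa using congr($hψ p)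
    · simp
  · ext m
    simp

end

theorem stmt_15_general (Λ : Type) [Ring Λ]
    (E : Type) [AddCommGroup E] [Module Λ E]
    -- `E` is an additive generator: every finitely generated `Λ`-module is in `add(E)`:
    (hE : ∀ (M : ModuleCat.{0} Λ), Module.Finite Λ M →
      ∃ (n : ℕ) (s : M →ₗ[Λ] (Fin n → E)) (r : (Fin n → E) →ₗ[Λ] M),
        r.comp s = LinearMap.id)
    (M₁ M₀ N₁ N₀ : Type)
    [AddCommGroup M₁] [Module Λ M₁]
    [AddCommGroup M₀] [Module Λ M₀] [Module.Finite Λ M₀]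
    [AddCommGroup N₁] [Module Λ N₁]
    [AddCommGroup N₀] [Module Λ N₀]
    (fM : M₁ →ₗ[Λ] M₀) (fN : N₁ →ₗ[Λ] N₀)
    (g₁ : M₁ →ₗ[Λ] N₁) (g₀ : M₀ →ₗ[Λ] N₀)
    (sq : fN.comp g₁ = g₀.comp fM)
    -- the induced map on cokernels `coker Hom(E, f_M) → coker Hom(E, f_N)` is zero:
    (hzero : ∀ h : E →ₗ[Λ] M₀, ∃ h' : E →ₗ[Λ] N₁, g₀.comp h = fN.comp h') :
    ∃ (P Q : ModuleCat.{0} Λ) (a₁ : M₁ →ₗ[Λ] P × Q) (a₀ : M₀ →ₗ[Λ] P)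
      (b₁ : (P × Q : Type) →ₗ[Λ] N₁) (b₀ : P →ₗ[Λ] N₀),
      (LinearMap.fst Λ P Q).comp a₁ = a₀.comp fM ∧
      fN.comp b₁ = b₀.comp (LinearMap.fst Λ P Q) ∧
      b₁.comp a₁ = g₁ ∧ b₀.comp a₀ = g₀ := by
  obtain ⟨n, s, r, hrs⟩ := hE (.of Λ M₀) ‹_›
  obtain ⟨ψ, hψ⟩ := exists_lift_of_retract_pi hrs fN g₀ hzero
  obtain ⟨a₁, b₁, h_fst, h_fN, h_g₁⟩ := exists_factorization_through_fst_ker sq hψ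
  exact ⟨.of Λ M₀, .of Λ (ker fN), a₁, id, b₁, g₀, h_fst, h_fN, h_g₁, comp_id g₀⟩

/-- Let `Λ` be a basic representation-finite finite-dimensional algebra,
`E` its additive generator (in particular `Λ ∈ add E`), and `Γ = End_Λ(E)^op`. If a
morphism `(g₁, g₀) : (f_M : M₁ → M₀) → (f_N : N₁ → N₀)` of the morphism category induces
the zero map on cokernels `coker Hom(E, f_M) → coker Hom(E, f_N)` (equivalently, the
range of `g₀ ∘ -` on `Hom(E, M₀)` is contained in the range of `f_N ∘ -`), then
`(g₁, g₀)` factors through an object which is a direct sum of an object of the form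
`(id : P → P)` and an object of the form `(Q → 0)`, i.e. through
`(fst : P × Q → P)`. -/
theorem stmt_15 (k : Type) [Field k] (Λ : Type) [Ring Λ] [Algebra k Λ]
    [FiniteDimensional k Λ]
    (E : Type) [AddCommGroup E] [Module Λ E] [Module k E] [IsScalarTower k Λ E]
    [FiniteDimensional k E]
    -- `Λ ∈ add(E)`:
    (hΛE : ∃ (n : ℕ) (s : Λ →ₗ[Λ] (Fin n → E)) (r : (Fin n → E) →ₗ[Λ] Λ),
      r.comp s = LinearMap.id)
    -- `E` is an additive generator: every finitely generated `Λ`-module is in `add(E)`: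
    (hE : ∀ (M : ModuleCat.{0} Λ), Module.Finite Λ M →
      ∃ (n : ℕ) (s : M →ₗ[Λ] (Fin n → E)) (r : (Fin n → E) →ₗ[Λ] M),
        r.comp s = LinearMap.id)
    (M₁ M₀ N₁ N₀ : Type)
    [AddCommGroup M₁] [Module Λ M₁] [Module.Finite Λ M₁]
    [AddCommGroup M₀] [Module Λ M₀] [Module.Finite Λ M₀]
    [AddCommGroup N₁] [Module Λ N₁] [Module.Finite Λ N₁]
    [AddCommGroup N₀] [Module Λ N₀] [Module.Finite Λ N₀]
    (fM : M₁ →ₗ[Λ] M₀) (fN : N₁ →ₗ[Λ] N₀)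
    (g₁ : M₁ →ₗ[Λ] N₁) (g₀ : M₀ →ₗ[Λ] N₀)
    (sq : fN.comp g₁ = g₀.comp fM)
    -- the induced map on cokernels `coker Hom(E, f_M) → coker Hom(E, f_N)` is zero:
    (hzero : ∀ h : E →ₗ[Λ] M₀, ∃ h' : E →ₗ[Λ] N₁, g₀.comp h = fN.comp h') :
    ∃ (P Q : ModuleCat.{0} Λ) (a₁ : M₁ →ₗ[Λ] P × Q) (a₀ : M₀ →ₗ[Λ] P)
      (b₁ : (P × Q : Type) →ₗ[Λ] N₁) (b₀ : P →ₗ[Λ] N₀),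
      (LinearMap.fst Λ P Q).comp a₁ = a₀.comp fM ∧
      fN.comp b₁ = b₀.comp (LinearMap.fst Λ P Q) ∧
      b₁.comp a₁ = g₁ ∧ b₀.comp a₀ = g₀ :=
  stmt_15_general Λ E hE M₁ M₀ N₁ N₀ fM fN g₁ g₀ sq hzero
end
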